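/- Let 0 < ρ ≤ 2, −π/2 < χ < −π/6, and K > 0. Consider the equilibrium system: ρcosχ·x₂x₃ − 2Kx₁x₂ + (ρsinχ−1)x₁x₃ = λx₁; ρcosχ·x₁x₃ − K(x₁²−x₂²) − (ρsinχ+1)x₂x₃ = λx₂; ρcosχ·x₁x₂ − (x₂²−x₃²) + (1/2)(ρsinχ−1)(x₁²−x₂²) = λx₃; x₁²+x₂²+x₃² = 1. Then this system has a solution (x₁,x₂,x₃,λ) with x₂ = 0 and x₁ ≠ 0 if and only if K = ρcosχ·√((1−ρsinχ)/(2(2−ρsinχ))). Moreover, every such solution satisfies x₁² = 2(2−ρsinχ)/(5−3ρsinχ), x₃² = (1−ρsinχ)/(5−3ρsinχ), λ² = (1−ρsinχ)³/(5−3ρsinχ), x₁x₃ > 0, and λx₃ < 0. -/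

import Mathlib

/-!
With `x₂ = 0` and `x₁ ≠ 0` the first equation fixes `λ = (ρ sin χ - 1) x₃`, the second becomes the
linear relation `ρ cos χ · x₃ = K x₁`, and the third, after substituting `λ`, together with the
sphere condition is a linear system in `x₁², x₃²`. Squaring the linear relation and dividing by
`x₁²` then pins down `K²`, and the signs of `K` and `ρ cos χ` pin down `K` and the sign of `x₁x₃`.
-/

open Real

/-- The equilibrium system for the oriented octupolar potential with
parameters `(ρ, χ, K)`, unknowns `(x₁, x₂, x₃)` and Lagrange multiplier `lam`. -/
def EqSys (ρ χ K x₁ x₂ x₃ lam : ℝ) : Prop :=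
  ρ * Real.cos χ * x₂ * x₃ - 2 * K * x₁ * x₂ + (ρ * Real.sin χ - 1) * x₁ * x₃ = lam * x₁ ∧
  ρ * Real.cos χ * x₁ * x₃ - K * (x₁ ^ 2 - x₂ ^ 2) - (ρ * Real.sin χ + 1) * x₂ * x₃ = lam * x₂ ∧
  ρ * Real.cos χ * x₁ * x₂ - (x₂ ^ 2 - x₃ ^ 2)
      + (1 / 2) * (ρ * Real.sin χ - 1) * (x₁ ^ 2 - x₂ ^ 2) = lam * x₃ ∧
  x₁ ^ 2 + x₂ ^ 2 + x₃ ^ 2 = 1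

theorem eqSys_x₂_eq_zero_iff {ρ χ K x₁ x₃ lam : ℝ} (hx₁ : x₁ ≠ 0) :
    EqSys ρ χ K x₁ 0 x₃ lam ↔
      lam = (ρ * sin χ - 1) * x₃ ∧ ρ * cos χ * x₃ = K * x₁ ∧
        2 * (2 - ρ * sin χ) * x₃ ^ 2 = (1 - ρ * sin χ) * x₁ ^ 2 ∧ x₁ ^ 2 + x₃ ^ 2 = 1 := by
  unfold EqSys
  constructor
  · rintro ⟨e₁, e₂, e₃, e₄⟩
    have hlam : lam = (ρ * sin χ - 1) * x₃ :=
      mul_right_cancel₀ hx₁ (by linear_combination -e₁)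
    exact ⟨hlam, mul_right_cancel₀ hx₁ (by linear_combination e₂),
      by linear_combination 2 * e₃ + 2 * x₃ * hlam, by linear_combination e₄⟩
  · rintro ⟨hlam, hK, hsq, hsum⟩
    exact ⟨by linear_combination -x₁ * hlam, by linear_combination x₁ * hK,
      by linear_combination hsq / 2 - x₃ * hlam, by linear_combination hsum⟩

section ReducedSystem

variable {s c K a b : ℝ}

theorem two_mul_sq_eq_and_sq_add_sq_iff (hs : 5 - 3 * s ≠ 0) :
    2 * (2 - s) * b ^ 2 = (1 - s) * a ^ 2 ∧ a ^ 2 + b ^ 2 = 1 ↔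
      a ^ 2 = 2 * (2 - s) / (5 - 3 * s) ∧ b ^ 2 = (1 - s) / (5 - 3 * s) := by
  rw [eq_div_iff hs, eq_div_iff hs]
  constructor
  · rintro ⟨hsq, hsum⟩
    exact ⟨by linear_combination (2 * (2 - s)) * hsum - hsq,
      by linear_combination hsq + (1 - s) * hsum⟩
  · rintro ⟨ha, hb⟩
    exact ⟨mul_left_cancel₀ hs (by linear_combination 2 * (2 - s) * hb - (1 - s) * ha),
      mul_left_cancel₀ hs (by linear_combination ha + hb)⟩

theorem eq_mul_sqrt_of_mul_eq_mul (hK : 0 ≤ K) (hc : 0 ≤ c) (hs : s < 2) (ha : a ≠ 0)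
    (hcK : c * b = K * a) (hsq : 2 * (2 - s) * b ^ 2 = (1 - s) * a ^ 2) :
    K = c * √((1 - s) / (2 * (2 - s))) := by
  have hK2 : K ^ 2 = c ^ 2 * ((1 - s) / (2 * (2 - s))) := by
    rw [mul_div_assoc', eq_div_iff (by linarith)]
    refine mul_right_cancel₀ (pow_ne_zero 2 ha) ?_
    linear_combination c ^ 2 * hsq - 2 * (2 - s) * (c * b + K * a) * hcK
  calc K = √(K ^ 2) := (sqrt_sq hK).symm
    _ = c * √((1 - s) / (2 * (2 - s))) := by rw [hK2, sqrt_mul (sq_nonneg c), sqrt_sq hc]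

theorem exists_of_eq_mul_sqrt (hs : s < 1) (hK : K = c * √((1 - s) / (2 * (2 - s)))) :
    ∃ a b : ℝ, a ≠ 0 ∧ c * b = K * a ∧
      2 * (2 - s) * b ^ 2 = (1 - s) * a ^ 2 ∧ a ^ 2 + b ^ 2 = 1 := by
  have h5 : 0 < 5 - 3 * s := by linarith
  have ha : 0 < 2 * (2 - s) / (5 - 3 * s) := div_pos (by linarith) h5
  have hb : 0 < (1 - s) / (5 - 3 * s) := div_pos (by linarith) h5
  refine ⟨√(2 * (2 - s) / (5 - 3 * s)), √((1 - s) / (5 - 3 * s)), (sqrt_pos.2 ha).ne', ?_,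
    (two_mul_sq_eq_and_sq_add_sq_iff h5.ne').2 ⟨sq_sqrt ha.le, sq_sqrt hb.le⟩⟩
  have hba : (1 - s) / (5 - 3 * s) = (1 - s) / (2 * (2 - s)) * (2 * (2 - s) / (5 - 3 * s)) := by
    field_simp [show 2 - s ≠ 0 by linarith]
  rw [hK, hba, sqrt_mul (div_pos (by linarith) (by linarith)).le, mul_assoc]

end ReducedSystem

theorem stmt8_general (ρ χ K : ℝ) (hρ : 0 < ρ)
    (hχ1 : -(π / 2) < χ) (hχ2 : χ < -(π / 6)) (hK : 0 < K) :
    ((∃ x₁ x₃ lam : ℝ, x₁ ≠ 0 ∧ EqSys ρ χ K x₁ 0 x₃ lam) ↔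
      K = ρ * Real.cos χ *
        Real.sqrt ((1 - ρ * Real.sin χ) / (2 * (2 - ρ * Real.sin χ)))) ∧
    (∀ x₁ x₃ lam : ℝ, x₁ ≠ 0 → EqSys ρ χ K x₁ 0 x₃ lam →
      x₁ ^ 2 = 2 * (2 - ρ * Real.sin χ) / (5 - 3 * ρ * Real.sin χ) ∧
      x₃ ^ 2 = (1 - ρ * Real.sin χ) / (5 - 3 * ρ * Real.sin χ) ∧
      lam ^ 2 = (1 - ρ * Real.sin χ) ^ 3 / (5 - 3 * ρ * Real.sin χ) ∧
      0 < x₁ * x₃ ∧ lam * x₃ < 0) := by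
  have hc : 0 < ρ * cos χ := mul_pos hρ (cos_pos_of_mem_Ioo ⟨hχ1, by linarith [pi_pos]⟩)
  have hs : ρ * sin χ < 0 :=
    mul_neg_of_pos_of_neg hρ (sin_neg_of_neg_of_neg_pi_lt (by linarith [pi_pos]) (by linarith))
  have h5 : 0 < 5 - 3 * (ρ * sin χ) := by linarith
  simp only [mul_assoc 3 ρ]
  refine ⟨⟨?_, ?_⟩, ?_⟩
  · rintro ⟨x₁, x₃, lam, hx₁, hsys⟩
    obtain ⟨-, hcK, hsq, -⟩ := (eqSys_x₂_eq_zero_iff hx₁).1 hsys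
    exact eq_mul_sqrt_of_mul_eq_mul hK.le hc.le (by linarith) hx₁ hcK hsq
  · intro hKeq
    obtain ⟨a, b, ha, hcK, hsq, hsum⟩ := exists_of_eq_mul_sqrt (by linarith) hKeq
    exact ⟨a, b, _, ha, (eqSys_x₂_eq_zero_iff ha).2 ⟨rfl, hcK, hsq, hsum⟩⟩
  · intro x₁ x₃ lam hx₁ hsys
    obtain ⟨rfl, hcK, hsq, hsum⟩ := (eqSys_x₂_eq_zero_iff hx₁).1 hsys
    obtain ⟨hx₁sq, hx₃sq⟩ := (two_mul_sq_eq_and_sq_add_sq_iff h5.ne').1 ⟨hsq, hsum⟩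
    have hx₃sq_pos : 0 < x₃ ^ 2 := hx₃sq ▸ div_pos (by linarith) h5
    refine ⟨hx₁sq, hx₃sq, by rw [mul_pow, hx₃sq]; ring, ?_, ?_⟩
    · have hprod : ρ * cos χ * (x₁ * x₃) = K * x₁ ^ 2 := by linear_combination x₁ * hcK
      exact pos_of_mul_pos_right (hprod ▸ mul_pos hK (sq_pos_of_ne_zero hx₁)) hc.le
    · rw [mul_assoc, ← sq]
      exact mul_neg_of_neg_of_pos (by linarith) hx₃sq_pos

theorem stmt8 (ρ χ K : ℝ) (hρ : 0 < ρ) (hρ2 : ρ ≤ 2)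
    (hχ1 : -(π / 2) < χ) (hχ2 : χ < -(π / 6)) (hK : 0 < K) :
    ((∃ x₁ x₃ lam : ℝ, x₁ ≠ 0 ∧ EqSys ρ χ K x₁ 0 x₃ lam) ↔
      K = ρ * Real.cos χ *
        Real.sqrt ((1 - ρ * Real.sin χ) / (2 * (2 - ρ * Real.sin χ)))) ∧
    (∀ x₁ x₃ lam : ℝ, x₁ ≠ 0 → EqSys ρ χ K x₁ 0 x₃ lam →
      x₁ ^ 2 = 2 * (2 - ρ * Real.sin χ) / (5 - 3 * ρ * Real.sin χ) ∧
      x₃ ^ 2 = (1 - ρ * Real.sin χ) / (5 - 3 * ρ * Real.sin χ) ∧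
      lam ^ 2 = (1 - ρ * Real.sin χ) ^ 3 / (5 - 3 * ρ * Real.sin χ) ∧
      0 < x₁ * x₃ ∧ lam * x₃ < 0) :=
  stmt8_general ρ χ K hρ hχ1 hχ2 hK
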